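/- Let X be a nonempty set, ν ∈ [0,1), and N a map from bounded real-valued functions on X to bounded real-valued functions on X satisfying sp(N u − N v) ≤ ν·sp(u − v) for all bounded u, v, where sp(w) := sup_x w(x) − inf_x w(x). Let h : X → ℝ be a bounded function and c ∈ ℝ with N h = h + c (the function obtained by adding the constant c to h pointwise). Let ε ≥ 0 and let (u_t)_{t≥0} be a sequence of bounded functions with ‖u_{t+1} − N u_t‖_∞ ≤ ε for all t ≥ 0. Then for every t ≥ 0: sp(u_t − h) ≤ ν^t·sp(u_0 − h) + 2ε·(1 − ν^t)/(1 − ν). -/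
import Mathlib


/-- A real-valued function on `X` is bounded. -/
def IsBoundedFun {X : Type*} (f : X → ℝ) : Prop :=
  ∃ C, ∀ x, |f x| ≤ C

/-- The span seminorm `sp(w) = sup_x w x - inf_x w x` of a function `w : X → ℝ`. -/
noncomputable def spanSeminorm {X : Type*} (w : X → ℝ) : ℝ :=
  (⨆ x, w x) - ⨅ x, w x

lemma IsBoundedFun.bddAbove {X : Type*} {f : X → ℝ} (hf : IsBoundedFun f) :
    BddAbove (Set.range f) := by
  obtain ⟨C, hC⟩ := hf
  exact ⟨C, by rintro _ ⟨x, rfl⟩; exact (abs_le.mp (hC x)).2⟩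

lemma IsBoundedFun.bddBelow {X : Type*} {f : X → ℝ} (hf : IsBoundedFun f) :
    BddBelow (Set.range f) := by
  obtain ⟨C, hC⟩ := hf
  exact ⟨-C, by rintro _ ⟨x, rfl⟩; exact (abs_le.mp (hC x)).1⟩

lemma IsBoundedFun.sub {X : Type*} {f g : X → ℝ} (hf : IsBoundedFun f) (hg : IsBoundedFun g) :
    IsBoundedFun (fun x => f x - g x) := by
  obtain ⟨C, hC⟩ := hf; obtain ⟨D, hD⟩ := hg
  exact ⟨C + D, fun x => (abs_sub _ _).trans (add_le_add (hC x) (hD x))⟩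

lemma sp_add_le {X : Type*} [Nonempty X] {f g : X → ℝ} (hf : IsBoundedFun f)
    (hg : IsBoundedFun g) :
    spanSeminorm (fun x => f x + g x) ≤ spanSeminorm f + spanSeminorm g := by
  have h1 : (⨆ x, f x + g x) ≤ (⨆ x, f x) + ⨆ x, g x :=
    ciSup_le fun x => add_le_add (le_ciSup hf.bddAbove x) (le_ciSup hg.bddAbove x)
  have h2 : (⨅ x, f x) + (⨅ x, g x) ≤ ⨅ x, f x + g x :=
    le_ciInf fun x => add_le_add (ciInf_le hf.bddBelow x) (ciInf_le hg.bddBelow x)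
  unfold spanSeminorm
  linarith

lemma sp_le_of_abs_le {X : Type*} [Nonempty X] {f : X → ℝ} {ε : ℝ}
    (hf : ∀ x, |f x| ≤ ε) : spanSeminorm f ≤ 2 * ε := by
  have h1 : (⨆ x, f x) ≤ ε := ciSup_le fun x => (abs_le.mp (hf x)).2
  have h2 : -ε ≤ ⨅ x, f x := le_ciInf fun x => (abs_le.mp (hf x)).1
  unfold spanSeminorm
  linarith

lemma sp_add_const {X : Type*} [Nonempty X] {f : X → ℝ} (hf : IsBoundedFun f) (c : ℝ) :
    spanSeminorm (fun x => f x + c) = spanSeminorm f := by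
  unfold spanSeminorm
  show (⨆ x, f x + c) - (⨅ x, f x + c) = _
  rw [← ciSup_add hf.bddAbove c, ← ciInf_add hf.bddBelow c]
  ring

/-- If `N` is a `1`-stage `ν`-span contraction on bounded functions with
`N h = h + c` for a bounded `h` and constant `c`, and `(u t)` is a sequence of bounded
functions with `‖u (t+1) - N (u t)‖_∞ ≤ ε`, then
`sp(u t - h) ≤ ν^t sp(u₀ - h) + 2ε (1 - ν^t)/(1-ν)` for all `t`. -/
theorem stmt_10 {X : Type*} [Nonempty X] (ν : ℝ) (hν : ν ∈ Set.Ico (0 : ℝ) 1)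
    (N : (X → ℝ) → (X → ℝ))
    (hNb : ∀ f, IsBoundedFun f → IsBoundedFun (N f))
    (hN : ∀ u v, IsBoundedFun u → IsBoundedFun v →
      spanSeminorm (fun x => N u x - N v x) ≤ ν * spanSeminorm (fun x => u x - v x))
    (h : X → ℝ) (hhb : IsBoundedFun h) (c : ℝ) (hNh : ∀ x, N h x = h x + c)
    (ε : ℝ) (hε : 0 ≤ ε)
    (u : ℕ → X → ℝ) (hub : ∀ t, IsBoundedFun (u t))
    (hu : ∀ t x, |u (t + 1) x - N (u t) x| ≤ ε) :
    ∀ t : ℕ, spanSeminorm (fun x => u t x - h x) ≤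
      ν ^ t * spanSeminorm (fun x => u 0 x - h x) + 2 * ε * (1 - ν ^ t) / (1 - ν) := by
  obtain ⟨hν0, hν1⟩ := hν
  have h1ν : (0 : ℝ) < 1 - ν := by linarith
  intro t
  induction t with
  | zero => simp
  | succ t ih =>
    have hb1 : IsBoundedFun (fun x => u (t + 1) x - N (u t) x) :=
      (hub (t + 1)).sub (hNb _ (hub t))
    have hb2 : IsBoundedFun (fun x => N (u t) x - N h x) :=
      (hNb _ (hub t)).sub (hNb _ hhb)
    have key : spanSeminorm (fun x => u (t + 1) x - h x) ≤
        2 * ε + ν * spanSeminorm (fun x => u t x - h x) := by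
      have step1 : spanSeminorm (fun x => u (t + 1) x - h x) ≤
          spanSeminorm (fun x => u (t + 1) x - N (u t) x) +
          spanSeminorm (fun x => N (u t) x - h x) := by
        have := sp_add_le (f := fun x => u (t + 1) x - N (u t) x)
          (g := fun x => N (u t) x - h x) hb1 ((hNb _ (hub t)).sub hhb)
        simpa using this
      have step2 : spanSeminorm (fun x => u (t + 1) x - N (u t) x) ≤ 2 * ε :=
        sp_le_of_abs_le (hu t)
      have step3 : spanSeminorm (fun x => N (u t) x - h x) ≤
          ν * spanSeminorm (fun x => u t x - h x) := by
        have heq : spanSeminorm (fun x => N (u t) x - h x) =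
            spanSeminorm (fun x => N (u t) x - N h x) := by
          have : (fun x => N (u t) x - h x) = fun x => (N (u t) x - N h x) + c := by
            funext x; rw [hNh x]; ring
          rw [this, sp_add_const hb2 c]
        rw [heq]
        exact hN _ _ (hub t) hhb
      linarith
    have hsp0 : 0 ≤ spanSeminorm (fun x => u t x - h x) := by
      unfold spanSeminorm
      have hb : IsBoundedFun (fun x => u t x - h x) := (hub t).sub hhb
      have : (⨅ x, u t x - h x) ≤ ⨆ x, u t x - h x :=
        (ciInf_le hb.bddBelow (Classical.arbitrary X)).trans
          (le_ciSup hb.bddAbove (Classical.arbitrary X))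
      linarith
    calc spanSeminorm (fun x => u (t + 1) x - h x)
        ≤ 2 * ε + ν * spanSeminorm (fun x => u t x - h x) := key
      _ ≤ 2 * ε + ν * (ν ^ t * spanSeminorm (fun x => u 0 x - h x) +
            2 * ε * (1 - ν ^ t) / (1 - ν)) := by nlinarith [mul_le_mul_of_nonneg_left ih hν0]
      _ = ν ^ (t + 1) * spanSeminorm (fun x => u 0 x - h x) +
            2 * ε * (1 - ν ^ (t + 1)) / (1 - ν) := by
          field_simp
          ring
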